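/- Let α₁,α₂,α₃,ε ∈ ℝ and let (x₁,x₂,x₃,y₁,y₂,y₃) ∈ ℝ⁶ and (x̃₁,x̃₂,x̃₃,ỹ₁,ỹ₂,ỹ₃) ∈ ℝ⁶ satisfy, for every cyclic permutation (i,j,k) of (1,2,3), the d3W equations x̃_i − x_i = εα_i(x_jỹ_k + x̃_jy_k + y_jx̃_k + ỹ_jx_k) and ỹ_i − y_i = εα_i(x_jx̃_k + x̃_jx_k − y_jỹ_k − ỹ_jy_k). Write |z_i|² = x_i² + y_i² and |z̃_i|² = x̃_i² + ỹ_i². Assume 1 − ε²α_jα_k|z_i|² ≠ 0 and 1 − ε²α_jα_k|z̃_i|² ≠ 0 for each i. Then for each cyclic permutation (i,j,k) of (1,2,3), H_i(ε) = (α_j|z_k|² − α_k|z_j|²)/(1 − ε²α_jα_k|z_i|²) is a conserved quantity: H_i(ε)(x̃,ỹ) = H_i(ε)(x,y). -/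
import Mathlib

/-- Conserved quantities `Hᵢ(ε)` of the Hirota–Kimura discretization d3W of the
three wave interaction system, written in real variables `zᵢ = xᵢ + i·yᵢ`. -/
theorem d3W_integrals
    (a1 a2 a3 ε x1 x2 x3 y1 y2 y3 xt1 xt2 xt3 yt1 yt2 yt3 : ℝ)
    (hx1 : xt1 - x1 = ε * a1 * (x2 * yt3 + xt2 * y3 + y2 * xt3 + yt2 * x3))
    (hy1 : yt1 - y1 = ε * a1 * (x2 * xt3 + xt2 * x3 - y2 * yt3 - yt2 * y3))
    (hx2 : xt2 - x2 = ε * a2 * (x3 * yt1 + xt3 * y1 + y3 * xt1 + yt3 * x1))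
    (hy2 : yt2 - y2 = ε * a2 * (x3 * xt1 + xt3 * x1 - y3 * yt1 - yt3 * y1))
    (hx3 : xt3 - x3 = ε * a3 * (x1 * yt2 + xt1 * y2 + y1 * xt2 + yt1 * x2))
    (hy3 : yt3 - y3 = ε * a3 * (x1 * xt2 + xt1 * x2 - y1 * yt2 - yt1 * y2))
    (hd1 : 1 - ε ^ 2 * a2 * a3 * (x1 ^ 2 + y1 ^ 2) ≠ 0)
    (hd2 : 1 - ε ^ 2 * a3 * a1 * (x2 ^ 2 + y2 ^ 2) ≠ 0)
    (hd3 : 1 - ε ^ 2 * a1 * a2 * (x3 ^ 2 + y3 ^ 2) ≠ 0)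
    (hdt1 : 1 - ε ^ 2 * a2 * a3 * (xt1 ^ 2 + yt1 ^ 2) ≠ 0)
    (hdt2 : 1 - ε ^ 2 * a3 * a1 * (xt2 ^ 2 + yt2 ^ 2) ≠ 0)
    (hdt3 : 1 - ε ^ 2 * a1 * a2 * (xt3 ^ 2 + yt3 ^ 2) ≠ 0) :
    (a2 * (xt3 ^ 2 + yt3 ^ 2) - a3 * (xt2 ^ 2 + yt2 ^ 2))
        / (1 - ε ^ 2 * a2 * a3 * (xt1 ^ 2 + yt1 ^ 2))
      = (a2 * (x3 ^ 2 + y3 ^ 2) - a3 * (x2 ^ 2 + y2 ^ 2))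
        / (1 - ε ^ 2 * a2 * a3 * (x1 ^ 2 + y1 ^ 2)) ∧
    (a3 * (xt1 ^ 2 + yt1 ^ 2) - a1 * (xt3 ^ 2 + yt3 ^ 2))
        / (1 - ε ^ 2 * a3 * a1 * (xt2 ^ 2 + yt2 ^ 2))
      = (a3 * (x1 ^ 2 + y1 ^ 2) - a1 * (x3 ^ 2 + y3 ^ 2))
        / (1 - ε ^ 2 * a3 * a1 * (x2 ^ 2 + y2 ^ 2)) ∧
    (a1 * (xt2 ^ 2 + yt2 ^ 2) - a2 * (xt1 ^ 2 + yt1 ^ 2))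
        / (1 - ε ^ 2 * a1 * a2 * (xt3 ^ 2 + yt3 ^ 2))
      = (a1 * (x2 ^ 2 + y2 ^ 2) - a2 * (x1 ^ 2 + y1 ^ 2))
        / (1 - ε ^ 2 * a1 * a2 * (x3 ^ 2 + y3 ^ 2)) := by
  have s1 : (a2 * (xt3 ^ 2 + yt3 ^ 2) - a3 * (xt2 ^ 2 + yt2 ^ 2))
      - (a2 * (x3 ^ 2 + y3 ^ 2) - a3 * (x2 ^ 2 + y2 ^ 2))
      = ε ^ 2 * a1 * a2 * a3 *
        ((x2 ^ 2 + y2 ^ 2) * (xt3 ^ 2 + yt3 ^ 2)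
          - (xt2 ^ 2 + yt2 ^ 2) * (x3 ^ 2 + y3 ^ 2)) := by
    linear_combination a2 * (xt3 + x3) * hx3 + a2 * (yt3 + y3) * hy3
      - a3 * (xt2 + x2) * hx2 - a3 * (yt2 + y2) * hy2
      - ε * a2 * a3 * (xt2 * y3 + yt2 * x3 - x2 * yt3 - y2 * xt3) * hx1
      - ε * a2 * a3 * (xt2 * x3 - yt2 * y3 - x2 * xt3 + y2 * yt3) * hy1
  have s2 : (a3 * (xt1 ^ 2 + yt1 ^ 2) - a1 * (xt3 ^ 2 + yt3 ^ 2))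
      - (a3 * (x1 ^ 2 + y1 ^ 2) - a1 * (x3 ^ 2 + y3 ^ 2))
      = ε ^ 2 * a1 * a2 * a3 *
        ((x3 ^ 2 + y3 ^ 2) * (xt1 ^ 2 + yt1 ^ 2)
          - (xt3 ^ 2 + yt3 ^ 2) * (x1 ^ 2 + y1 ^ 2)) := by
    linear_combination a3 * (xt1 + x1) * hx1 + a3 * (yt1 + y1) * hy1
      - a1 * (xt3 + x3) * hx3 - a1 * (yt3 + y3) * hy3
      - ε * a3 * a1 * (xt3 * y1 + yt3 * x1 - x3 * yt1 - y3 * xt1) * hx2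
      - ε * a3 * a1 * (xt3 * x1 - yt3 * y1 - x3 * xt1 + y3 * yt1) * hy2
  have s3 : (a1 * (xt2 ^ 2 + yt2 ^ 2) - a2 * (xt1 ^ 2 + yt1 ^ 2))
      - (a1 * (x2 ^ 2 + y2 ^ 2) - a2 * (x1 ^ 2 + y1 ^ 2))
      = ε ^ 2 * a1 * a2 * a3 *
        ((x1 ^ 2 + y1 ^ 2) * (xt2 ^ 2 + yt2 ^ 2)
          - (xt1 ^ 2 + yt1 ^ 2) * (x2 ^ 2 + y2 ^ 2)) := by
    linear_combination a1 * (xt2 + x2) * hx2 + a1 * (yt2 + y2) * hy2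
      - a2 * (xt1 + x1) * hx1 - a2 * (yt1 + y1) * hy1
      - ε * a1 * a2 * (xt1 * y2 + yt1 * x2 - x1 * yt2 - y1 * xt2) * hx3
      - ε * a1 * a2 * (xt1 * x2 - yt1 * y2 - x1 * xt2 + y1 * yt2) * hy3
  have ssum : a1 * ((x2 ^ 2 + y2 ^ 2) * (xt3 ^ 2 + yt3 ^ 2)
        - (xt2 ^ 2 + yt2 ^ 2) * (x3 ^ 2 + y3 ^ 2))
      + a2 * ((x3 ^ 2 + y3 ^ 2) * (xt1 ^ 2 + yt1 ^ 2)
        - (xt3 ^ 2 + yt3 ^ 2) * (x1 ^ 2 + y1 ^ 2))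
      + a3 * ((x1 ^ 2 + y1 ^ 2) * (xt2 ^ 2 + yt2 ^ 2)
        - (xt1 ^ 2 + yt1 ^ 2) * (x2 ^ 2 + y2 ^ 2)) = 0 := by
    linear_combination (-(xt1 ^ 2 + yt1 ^ 2)) * s1 + (-(xt2 ^ 2 + yt2 ^ 2)) * s2
      + (-(xt3 ^ 2 + yt3 ^ 2)) * s3
  refine ⟨?_, ?_, ?_⟩
  · rw [div_eq_div_iff hdt1 hd1]
    linear_combination s1 + ε ^ 2 * a2 * a3 * ssum
  · rw [div_eq_div_iff hdt2 hd2]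
    linear_combination s2 + ε ^ 2 * a3 * a1 * ssum
  · rw [div_eq_div_iff hdt3 hd3]
    linear_combination s3 + ε ^ 2 * a1 * a2 * ssum
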